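/- arXiv:0912.1968 — 2 statements merged into one kernel-verified Lean document; each statement's English description precedes it below -/
import Mathlib

section
/- Let $\lambda, \mu_1, \dots, \mu_m \in \mathbb{C}$, $h > 0$, $\theta \in [0,1]$ with $1 - \theta h \lambda \neq 0$, and define $a = 1 + \tfrac{h\lambda}{1-\theta h \lambda}$ and $b_r = \tfrac{\sqrt{h}\,\mu_r}{1-\theta h \lambda}$. Then the inequality $|a|^2 + \sum_{r=1}^m |b_r|^2 < 1$ holds if and only if $\mathrm{Re}(\lambda) + \tfrac{1}{2}\sum_{r=1}^m |\mu_r|^2 + \tfrac{1}{2} h (1 - 2\theta)|\lambda|^2 < 0$. -/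
/-!
Clearing the common denominator `d = 1 - θhλ`, the condition `|a|² + ∑ |b_r|² < 1` becomes
`|1 + (1 - θ)hλ|² + h ∑ |μ_r|² < |d|²`, and
`|1 + (1 - θ)w|² - |1 - θw|² = 2 Re w + (1 - 2θ)|w|²` turns this into `2h` times the
stated condition being negative.
-/

open Finset

theorem one_add_div_one_sub_mul {K : Type*} [Field K] (θ w : K) (hne : 1 - θ * w ≠ 0) :
    1 + w / (1 - θ * w) = (1 + (1 - θ) * w) / (1 - θ * w) := by
  rw [one_add_div hne]
  ring

theorem Complex.sq_norm_one_add_sub_sq_norm_one_sub (θ : ℝ) (w : ℂ) :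
    ‖1 + (1 - θ : ℂ) * w‖ ^ 2 - ‖1 - (θ : ℂ) * w‖ ^ 2 = 2 * w.re + (1 - 2 * θ) * ‖w‖ ^ 2 := by
  simp only [Complex.sq_norm, Complex.normSq_apply, Complex.add_re, Complex.add_im,
    Complex.sub_re, Complex.sub_im, Complex.mul_re, Complex.mul_im, Complex.one_re,
    Complex.one_im, Complex.ofReal_re, Complex.ofReal_im]
  ring

theorem sq_norm_div_add_sum_sq_norm_div_lt_one_iff {K ι : Type*} [NormedField K]
    (s : Finset ι) (x d : K) (y : ι → K) (hd : d ≠ 0) :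
    ‖x / d‖ ^ 2 + ∑ r ∈ s, ‖y r / d‖ ^ 2 < 1 ↔ ‖x‖ ^ 2 + ∑ r ∈ s, ‖y r‖ ^ 2 < ‖d‖ ^ 2 := by
  simp only [norm_div, div_pow, ← sum_div, ← add_div]
  exact div_lt_one (by positivity)

theorem theta_maruyama_stability_condition_general
    (m : ℕ) (lam : ℂ) (mu : Fin m → ℂ) (h θ : ℝ)
    (hh : 0 < h)
    (hne : 1 - (θ : ℂ) * (h : ℂ) * lam ≠ 0)
    (a : ℂ) (ha : a = 1 + (h : ℂ) * lam / (1 - (θ : ℂ) * (h : ℂ) * lam))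
    (b : Fin m → ℂ)
    (hb : ∀ r, b r = (Real.sqrt h : ℂ) * mu r / (1 - (θ : ℂ) * (h : ℂ) * lam)) :
    (‖a‖ ^ 2 + ∑ r, ‖b r‖ ^ 2 < 1) ↔
      (lam.re + (1 / 2) * ∑ r, ‖mu r‖ ^ 2
        + (1 / 2) * h * (1 - 2 * θ) * ‖lam‖ ^ 2 < 0) := by
  simp only [mul_assoc (θ : ℂ)] at hne ha hb
  have hnoise : ∀ r, ‖(Real.sqrt h : ℂ) * mu r‖ ^ 2 = h * ‖mu r‖ ^ 2 := fun r => by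
    rw [norm_mul, mul_pow, Complex.norm_real, Real.norm_eq_abs, sq_abs, Real.sq_sqrt hh.le]
  have hdiff : ‖1 + (1 - θ : ℂ) * (h * lam)‖ ^ 2 + ∑ r, h * ‖mu r‖ ^ 2
        - ‖1 - (θ : ℂ) * (h * lam)‖ ^ 2
      = 2 * h * (lam.re + (1 / 2) * ∑ r, ‖mu r‖ ^ 2
        + (1 / 2) * h * (1 - 2 * θ) * ‖lam‖ ^ 2) := by
    rw [add_sub_right_comm, Complex.sq_norm_one_add_sub_sq_norm_one_sub, ← mul_sum,
      Complex.re_ofReal_mul, norm_mul, Complex.norm_real, Real.norm_of_nonneg hh.le]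
    ring
  simp only [ha, hb, one_add_div_one_sub_mul _ _ hne]
  rw [sq_norm_div_add_sum_sq_norm_div_lt_one_iff _ _ _ _ hne, ← sub_neg]
  have h2h : 0 < 2 * h := by positivity
  simp only [hnoise, hdiff, mul_neg_iff, h2h, h2h.not_gt, true_and, false_and, or_false]

theorem theta_maruyama_stability_condition
    (m : ℕ) (lam : ℂ) (mu : Fin m → ℂ) (h θ : ℝ)
    (hh : 0 < h) (hθ : θ ∈ Set.Icc (0 : ℝ) 1)
    (hne : 1 - (θ : ℂ) * (h : ℂ) * lam ≠ 0)
    (a : ℂ) (ha : a = 1 + (h : ℂ) * lam / (1 - (θ : ℂ) * (h : ℂ) * lam))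
    (b : Fin m → ℂ)
    (hb : ∀ r, b r = (Real.sqrt h : ℂ) * mu r / (1 - (θ : ℂ) * (h : ℂ) * lam)) :
    (‖a‖ ^ 2 + ∑ r, ‖b r‖ ^ 2 < 1) ↔
      (lam.re + (1 / 2) * ∑ r, ‖mu r‖ ^ 2
        + (1 / 2) * h * (1 - 2 * θ) * ‖lam‖ ^ 2 < 0) :=
  theta_maruyama_stability_condition_general m lam mu h θ hh hne a ha b hb
end

section
/- Let $\lambda, \mu_1, \dots, \mu_m \in \mathbb{C}$, $h > 0$, $\theta \geq 0$ with $1 - \theta h\lambda \neq 0$. Define $a = 1 + \tfrac{h\lambda}{1-\theta h\lambda}$, $b_r = \tfrac{\sqrt{h}\mu_r}{1-\theta h\lambda}$, $c_{r_1,r_2} = \tfrac{\tfrac12 h \mu_{r_1}\mu_{r_2}}{1-\theta h\lambda}$, and $c_{\mathrm{sum}} = \sum_{r_1\neq r_2} c_{r_1,r_2}$. Then $|a|^2 + \sum_{r=1}^m |b_r|^2 + 2\sum_{r=1}^m |c_{r,r}|^2 + |c_{\mathrm{sum}}|^2 < 1$ holds if and only if $\mathrm{Re}(\lambda) + \tfrac12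 \sum_{r=1}^m |\mu_r|^2 + \tfrac12 h(1-2\theta)|\lambda|^2 + \tfrac14 h \sum_{r=1}^m |\mu_r|^4 + \tfrac18 h\,\big|\sum_{r_1\neq r_2} \mu_{r_1}\mu_{r_2}\big|^2 < 0$. -/
/-!
All coefficients share the denominator `d = 1 - θhλ`, and `a = (1 + (1 - θ)hλ) / d`. Multiplying
by `‖d‖²`, the mean-square condition reads
`‖1 + (1 - θ)hλ‖² + h Σ‖μᵣ‖² + (h²/2) Σ‖μᵣ‖⁴ + (h²/4) ‖Σ_{r₁≠r₂} μ_{r₁}μ_{r₂}‖² < ‖d‖²`,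
and since `‖1 + (1 - θ)w‖² - ‖1 - θw‖² = 2 Re w + (1 - 2θ)‖w‖²`, the difference of the two sides is
`2h` times the expression in the second condition.
-/

open Finset

lemma norm_sq_one_add_sub_norm_sq_one_sub (w : ℂ) (θ : ℝ) :
    ‖1 + (1 - (θ : ℂ)) * w‖ ^ 2 - ‖1 - (θ : ℂ) * w‖ ^ 2
      = 2 * w.re + (1 - 2 * θ) * ‖w‖ ^ 2 := by
  simp only [Complex.sq_norm, Complex.normSq_apply, Complex.add_re, Complex.add_im,
    Complex.sub_re, Complex.sub_im, Complex.one_re, Complex.one_im, Complex.mul_re,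
    Complex.mul_im, Complex.ofReal_re, Complex.ofReal_im]
  ring

lemma norm_sq_sqrt_mul_div {h : ℝ} (hh : 0 ≤ h) (z d : ℂ) :
    ‖(Real.sqrt h : ℂ) * z / d‖ ^ 2 = h * ‖z‖ ^ 2 / ‖d‖ ^ 2 := by
  rw [norm_div, norm_mul, Complex.norm_real, Real.norm_of_nonneg (Real.sqrt_nonneg h),
    div_pow, mul_pow, Real.sq_sqrt hh]

lemma norm_sq_half_mul_div (h : ℝ) (z d : ℂ) :
    ‖(1 / 2 : ℂ) * h * z / d‖ ^ 2 = h ^ 2 / 4 * ‖z‖ ^ 2 / ‖d‖ ^ 2 := by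
  rw [norm_div, norm_mul, norm_mul, Complex.norm_real, Real.norm_eq_abs, norm_div,
    norm_one, Complex.norm_two, div_pow, mul_pow, mul_pow, sq_abs]
  ring

lemma lt_one_iff_neg_of_mul_eq_add_mul {x D k E : ℝ} (hD : 0 < D) (hk : 0 < k)
    (hx : x * D = D + k * E) : x < 1 ↔ E < 0 := by
  rw [← mul_lt_iff_lt_one_left hD, hx, add_lt_iff_neg_left]
  exact ⟨fun hkE => neg_of_mul_neg_right hkE hk.le, mul_neg_of_pos_of_neg hk⟩

theorem theta_milstein_stability_condition_general
    (m : ℕ) (lam : ℂ) (mu : Fin m → ℂ) (h θ : ℝ)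
    (hh : 0 < h)
    (hne : 1 - (θ : ℂ) * (h : ℂ) * lam ≠ 0)
    (a : ℂ) (ha : a = 1 + (h : ℂ) * lam / (1 - (θ : ℂ) * (h : ℂ) * lam))
    (b : Fin m → ℂ)
    (hb : ∀ r, b r = (Real.sqrt h : ℂ) * mu r / (1 - (θ : ℂ) * (h : ℂ) * lam))
    (c : Fin m → Fin m → ℂ)
    (hc : ∀ r₁ r₂, c r₁ r₂ = (1 / 2 : ℂ) * (h : ℂ) * mu r₁ * mu r₂
        / (1 - (θ : ℂ) * (h : ℂ) * lam))
    (csum : ℂ)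
    (hcsum : csum = ∑ p ∈ Finset.univ.filter (fun p : Fin m × Fin m => p.1 ≠ p.2),
        c p.1 p.2) :
    (‖a‖ ^ 2 + ∑ r, ‖b r‖ ^ 2
        + 2 * ∑ r, ‖c r r‖ ^ 2 + ‖csum‖ ^ 2 < 1) ↔
      (lam.re + (1 / 2) * ∑ r, ‖mu r‖ ^ 2
        + (1 / 2) * h * (1 - 2 * θ) * ‖lam‖ ^ 2
        + (1 / 4) * h * ∑ r, ‖mu r‖ ^ 4
        + (1 / 8) * h * ‖∑ p ∈ Finset.univ.filter
            (fun p : Fin m × Fin m => p.1 ≠ p.2), mu p.1 * mu p.2‖ ^ 2 < 0) := by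
  set d := 1 - (θ : ℂ) * h * lam
  have hd : 0 < ‖d‖ ^ 2 := by positivity
  have ha' : a = (1 + (1 - (θ : ℂ)) * (h * lam)) / d := by
    rw [ha]; field_simp; ring
  have hc' : ∀ r, ‖c r r‖ ^ 2 = h ^ 2 / 4 * ‖mu r‖ ^ 4 / ‖d‖ ^ 2 := fun r => by
    rw [hc, mul_assoc _ (mu r), norm_sq_half_mul_div, norm_mul, ← sq, ← pow_mul]
  have hcsum' : csum = (1 / 2 : ℂ) * h * (∑ p ∈ univ.filter (fun p : Fin m × Fin m =>
      p.1 ≠ p.2), mu p.1 * mu p.2) / d := by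
    rw [hcsum, mul_sum, sum_div]
    exact sum_congr rfl fun p _ => by rw [hc, mul_assoc _ (mu p.1)]
  have hnum : ‖1 + (1 - (θ : ℂ)) * (h * lam)‖ ^ 2
      = ‖d‖ ^ 2 + 2 * h * lam.re + h ^ 2 * (1 - 2 * θ) * ‖lam‖ ^ 2 := by
    have hdiff := norm_sq_one_add_sub_norm_sq_one_sub (h * lam) θ
    rw [Complex.re_ofReal_mul, norm_mul, Complex.norm_real, Real.norm_of_nonneg hh.le,
      ← mul_assoc (θ : ℂ)] at hdiff
    linarith
  simp_rw [ha', hb, norm_sq_sqrt_mul_div hh.le, hc', hcsum', norm_sq_half_mul_div, norm_div,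
    div_pow, hnum, ← sum_div, ← mul_sum]
  refine lt_one_iff_neg_of_mul_eq_add_mul hd (by positivity : (0 : ℝ) < 2 * h) ?_
  field_simp
  ring

theorem theta_milstein_stability_condition
    (m : ℕ) (lam : ℂ) (mu : Fin m → ℂ) (h θ : ℝ)
    (hh : 0 < h) (hθ : 0 ≤ θ)
    (hne : 1 - (θ : ℂ) * (h : ℂ) * lam ≠ 0)
    (a : ℂ) (ha : a = 1 + (h : ℂ) * lam / (1 - (θ : ℂ) * (h : ℂ) * lam))
    (b : Fin m → ℂ)
    (hb : ∀ r, b r = (Real.sqrt h : ℂ) * mu r / (1 - (θ : ℂ) * (h : ℂ) * lam))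
    (c : Fin m → Fin m → ℂ)
    (hc : ∀ r₁ r₂, c r₁ r₂ = (1 / 2 : ℂ) * (h : ℂ) * mu r₁ * mu r₂
        / (1 - (θ : ℂ) * (h : ℂ) * lam))
    (csum : ℂ)
    (hcsum : csum = ∑ p ∈ Finset.univ.filter (fun p : Fin m × Fin m => p.1 ≠ p.2),
        c p.1 p.2) :
    (‖a‖ ^ 2 + ∑ r, ‖b r‖ ^ 2
        + 2 * ∑ r, ‖c r r‖ ^ 2 + ‖csum‖ ^ 2 < 1) ↔
      (lam.re + (1 / 2) * ∑ r, ‖mu r‖ ^ 2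
        + (1 / 2) * h * (1 - 2 * θ) * ‖lam‖ ^ 2
        + (1 / 4) * h * ∑ r, ‖mu r‖ ^ 4
        + (1 / 8) * h * ‖∑ p ∈ Finset.univ.filter
            (fun p : Fin m × Fin m => p.1 ≠ p.2), mu p.1 * mu p.2‖ ^ 2 < 0) :=
  theta_milstein_stability_condition_general m lam mu h θ hh hne a ha b hb c hc csum hcsum
end
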